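/- Palindromic-structure matching is substring-consistent: if two equal-length strings X and Y have, for every center position, maximal palindromes of equal length (X ≈pal Y), then X[i..j] ≈pal Y[i..j] for all 1 ≤ i ≤ j ≤ |X|. -/

import Mathlib

/-- `sub S i j` is the substring `S[i..j]` (1-indexed, inclusive). -/
def sub {α : Type*} (S : List α) (i j : ℕ) : List α :=
  (S.drop (i - 1)).take (j - i + 1)

/-- length of the maximal palindrome of `S` whose center is `c / 2`
(`c = i + j` ranges over twice the centers; positions are 1-indexed). -/
noncomputable def maxPalLen {α : Type*} (S : List α) (c : ℕ) : ℕ :=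
  sSup {ℓ : ℕ | ∃ i j : ℕ, i + j = c ∧ 1 ≤ i ∧ i ≤ j + 1 ∧ j ≤ S.length ∧
    ℓ = j + 1 - i ∧ sub S i j = (sub S i j).reverse}

/-- `X` and `Y` palindromic-structure match. -/
def palMatch {α : Type*} (X Y : List α) : Prop :=
  X.length = Y.length ∧ ∀ c : ℕ, maxPalLen X c = maxPalLen Y c

/-!
At a fixed center, palindromes are nested: removing the first and last letter of a palindrome
leaves a palindrome with the same center. Hence the palindromes of `S` centered at `c` are exactly
the windows of the right parity around `c` that fit in `S` and are no longer than `maxPalLen S c`.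
So `X ≈pal Y` says precisely that `X` and `Y` have the same palindromic windows `[i, j]`, and the
palindromic windows of `X[i..j]` are those of `X` lying inside `[i, j]`, shifted by `i - 1`.
-/

section

open List

variable {α : Type*}

lemma length_sub (S : List α) {i j : ℕ} (h1 : 1 ≤ i) (hij : i ≤ j) (hj : j ≤ S.length) :
    (sub S i j).length = j - i + 1 := by
  simp only [sub, length_take, length_drop]
  omega

lemma length_sub_le_one (S : List α) {i j : ℕ} (h : j ≤ i) : (sub S i j).length ≤ 1 := by
  simp only [sub, length_take, length_drop]
  omega

lemma sub_sub_eq_sub (S : List α) {i j i' j' : ℕ} (h1 : 1 ≤ i) (h1' : 1 ≤ i')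
    (hij' : i' ≤ j') (hj' : j' ≤ j - i + 1) :
    sub (sub S i j) i' j' = sub S (i + i' - 1) (i + j' - 1) := by
  simp only [sub, drop_take, take_take, drop_drop]
  congr 1
  · omega
  · congr 1
    omega

lemma sub_succ_pred (S : List α) {i j : ℕ} (h1 : 1 ≤ i) (hij : i + 2 ≤ j) (hj : j ≤ S.length) :
    sub S (i + 1) (j - 1) = ((sub S i j).drop 1).dropLast := by
  simp only [sub, drop_take, drop_drop, dropLast_eq_take, take_take, length_take, length_drop]
  congr 1
  · omega
  · congr 1
    omega

lemma reverse_eq_self_of_length_le_one {l : List α} (h : l.length ≤ 1) : l.reverse = l := by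
  match l, h with
  | [], _ => rfl
  | [_], _ => rfl

lemma reverse_dropLast_drop_one_of_reverse_eq {l : List α} (h : l.reverse = l) :
    ((l.drop 1).dropLast).reverse = (l.drop 1).dropLast := by
  cases Palindrome.of_reverse_eq h with
  | nil => rfl
  | singleton x => rfl
  | cons_concat x hl =>
    simpa only [drop_one, tail_cons, dropLast_concat] using hl.reverse_eq

def palLens (S : List α) (c : ℕ) : Set ℕ :=
  {ℓ : ℕ | ∃ i j : ℕ, i + j = c ∧ 1 ≤ i ∧ i ≤ j + 1 ∧ j ≤ S.length ∧
    ℓ = j + 1 - i ∧ sub S i j = (sub S i j).reverse}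

lemma maxPalLen_eq_sSup_palLens (S : List α) (c : ℕ) : maxPalLen S c = sSup (palLens S c) :=
  rfl

lemma palLens_bounds {S : List α} {c ℓ : ℕ} (h : ℓ ∈ palLens S c) :
    (ℓ + c) % 2 = 1 ∧ ℓ + 1 ≤ c ∧ ℓ + c ≤ 2 * S.length + 1 := by
  obtain ⟨i, j, hc, hi, hij, hjS, rfl, -⟩ := h
  omega

lemma bddAbove_palLens (S : List α) (c : ℕ) : BddAbove (palLens S c) :=
  ⟨2 * S.length + 1, fun _ h => by have := palLens_bounds h; omega⟩

lemma mem_palLens_of_le_one {S : List α} {c ℓ : ℕ} (hℓ : ℓ ≤ 1) (hpar : (ℓ + c) % 2 = 1)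
    (hc : ℓ + 1 ≤ c) (hcS : ℓ + c ≤ 2 * S.length + 1) : ℓ ∈ palLens S c :=
  ⟨(c + 1 - ℓ) / 2, (c + ℓ - 1) / 2, by omega, by omega, by omega, by omega, by omega,
    (reverse_eq_self_of_length_le_one (length_sub_le_one S (by omega))).symm⟩

lemma mem_palLens_of_add_two_mem {S : List α} {c ℓ : ℕ} (h : ℓ + 2 ∈ palLens S c) :
    ℓ ∈ palLens S c := by
  obtain ⟨i, j, hc, hi, hij, hjS, hℓ, hpal⟩ := h
  rcases Nat.lt_or_ge ℓ 1 with hℓ0 | hℓ1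
  · exact mem_palLens_of_le_one (by omega) (by omega) (by omega) (by omega)
  · refine ⟨i + 1, j - 1, by omega, by omega, by omega, by omega, by omega, ?_⟩
    rw [sub_succ_pred S hi (by omega) hjS]
    exact (reverse_dropLast_drop_one_of_reverse_eq hpal.symm).symm

lemma mem_palLens_of_le {S : List α} {c ℓ m : ℕ} (hm : m ∈ palLens S c) (hℓm : ℓ ≤ m)
    (hpar : (ℓ + c) % 2 = 1) : ℓ ∈ palLens S c := by
  obtain ⟨n, rfl⟩ : ∃ n, m = ℓ + 2 * n := ⟨(m - ℓ) / 2, by have := palLens_bounds hm; omega⟩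
  clear hℓm
  induction n with
  | zero => simpa using hm
  | succ n ih => exact ih (mem_palLens_of_add_two_mem (by rwa [mul_add, ← add_assoc] at hm))

lemma mem_palLens_iff (S : List α) (c ℓ : ℕ) :
    ℓ ∈ palLens S c ↔ (ℓ + c) % 2 = 1 ∧ ℓ + 1 ≤ c ∧ ℓ + c ≤ 2 * S.length + 1 ∧
      ℓ ≤ maxPalLen S c := by
  refine ⟨fun h => ⟨(palLens_bounds h).1, (palLens_bounds h).2.1, (palLens_bounds h).2.2,
    le_csSup (bddAbove_palLens S c) h⟩, fun ⟨hpar, hc, hcS, hℓ⟩ => ?_⟩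
  have hne : (palLens S c).Nonempty :=
    ⟨ℓ % 2, mem_palLens_of_le_one (by omega) (by omega) (by omega) (by omega)⟩
  exact mem_palLens_of_le (Nat.sSup_mem hne (bddAbove_palLens S c)) hℓ hpar

lemma palLens_eq_of_palMatch {X Y : List α} (h : palMatch X Y) (c : ℕ) :
    palLens X c = palLens Y c := by
  ext ℓ
  rw [mem_palLens_iff, mem_palLens_iff, h.1, h.2 c]

lemma mem_palLens_sub_iff (S : List α) {i j : ℕ} (c : ℕ) (h1 : 1 ≤ i) (hij : i ≤ j)
    (hj : j ≤ S.length) (ℓ : ℕ) :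
    ℓ ∈ palLens (sub S i j) c ↔
      ℓ ∈ palLens S (c + 2 * (i - 1)) ∧ ℓ + 1 ≤ c ∧ ℓ + c ≤ 2 * (j - i + 1) + 1 := by
  have hlen := length_sub S h1 hij hj
  constructor
  · rintro ⟨i', j', hc, hi', hij', hjS', hℓ, hpal⟩
    rw [hlen] at hjS'
    refine ⟨⟨i + i' - 1, i + j' - 1, by omega, by omega, by omega, by omega, by omega, ?_⟩,
      by omega, by omega⟩
    rcases Nat.lt_or_ge j' i' with hlt | hge
    · exact (reverse_eq_self_of_length_le_one (length_sub_le_one S (by omega))).symm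
    · rwa [← sub_sub_eq_sub S h1 hi' hge hjS']
  · rintro ⟨⟨i', j', hc, hi', hij', hjS', hℓ, hpal⟩, hℓc, hcS⟩
    refine ⟨i' + 1 - i, j' + 1 - i, by omega, by omega, by omega, by omega, by omega, ?_⟩
    rcases Nat.lt_or_ge j' i' with hlt | hge
    · exact (reverse_eq_self_of_length_le_one (length_sub_le_one _ (by omega))).symm
    · rwa [sub_sub_eq_sub S h1 (by omega) (by omega) (by omega),
        show i + (i' + 1 - i) - 1 = i' by omega, show i + (j' + 1 - i) - 1 = j' by omega]
end

theorem stmt19 {α : Type*} (X Y : List α) (h : palMatch X Y)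
    (i j : ℕ) (h1 : 1 ≤ i) (hij : i ≤ j) (hj : j ≤ X.length) :
    palMatch (sub X i j) (sub Y i j) := by
  have hjY : j ≤ Y.length := h.1 ▸ hj
  refine ⟨by rw [length_sub X h1 hij hj, length_sub Y h1 hij hjY], fun c => ?_⟩
  rw [maxPalLen_eq_sSup_palLens, maxPalLen_eq_sSup_palLens]
  congr 1
  ext ℓ
  rw [mem_palLens_sub_iff X c h1 hij hj, mem_palLens_sub_iff Y c h1 hij hjY,
    palLens_eq_of_palMatch h]
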